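/- arXiv:math/9811102 — 3 statements merged into one kernel-verified Lean document; each statement's English description precedes it below -/
import Mathlib

section
/- For every finite group $G$, the group of singular orbit data $\mathbb{B}_G$ is a finitely generated abelian group isomorphic to $\mathbb{Z}^a\times(\mathbb{Z}/2\mathbb{Z})^b$ for some natural numbers $a$ and $b$, i.e. it is a direct sum of finitely many copies of $\mathbb{Z}$ and finitely many copies of $\mathbb{Z}/2\mathbb{Z}$. -/
open Finsupp

/-- The natural map from conjugacy classes of `G` to the abelianization of `G`. -/
def conjToAb {G : Type*} [Group G] : ConjClasses G → Abelianization G :=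
  Quotient.lift Abelianization.of (fun a b (h : IsConj a b) => by
    obtain ⟨c, hc⟩ := h
    have : Abelianization.of (c * a) = Abelianization.of (b * c) := by
      rw [hc.eq]
    simpa [map_mul, mul_comm] using this)

@[simp] lemma conjToAb_mk {G : Type*} [Group G] (a : G) :
    conjToAb (ConjClasses.mk a) = Abelianization.of a := rfl

/-- The degree map sending a formal `ℤ`-combination of conjugacy classes to the corresponding
product in the abelianization. -/
noncomputable def degMap (G : Type*) [Group G] :
    (ConjClasses G →₀ ℤ) →+ Additive (Abelianization G) :=
  Finsupp.liftAddHom (fun c => (zmultiplesHom _) (Additive.ofMul (conjToAb c)))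

@[simp] lemma degMap_single {G : Type*} [Group G] (a : G) (k : ℤ) :
    degMap G (Finsupp.single (ConjClasses.mk a) k)
      = k • (Additive.ofMul (Abelianization.of a)) := by
  simp [degMap]

/-- `lambdaKer G` consists of the formal `ℤ`-combinations of conjugacy classes whose product
lies in the commutator subgroup; these are the (differences of) singular orbit data. -/
noncomputable def lambdaKer (G : Type*) [Group G] : AddSubgroup (ConjClasses G →₀ ℤ) :=
  (degMap G).ker

/-- The subgroup of relations: the class of the identity, and the cancelling pairs
`[γ̂, γ̂⁻¹]`. -/
noncomputable def bRel (G : Type*) [Group G] : AddSubgroup (ConjClasses G →₀ ℤ) :=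
  AddSubgroup.closure
    (insert (Finsupp.single (ConjClasses.mk (1 : G)) 1)
      {x | ∃ γ : G, x = Finsupp.single (ConjClasses.mk γ) 1
        + Finsupp.single (ConjClasses.mk γ⁻¹) 1})

/-- The group of singular orbit data `𝔹_G`. -/
abbrev BG (G : Type*) [Group G] :=
  (lambdaKer G) ⧸ ((bRel G).addSubgroupOf (lambdaKer G))

/-- The formal sum of conjugacy classes corresponding to a finite (multi)set of group
elements, presented as a list. -/
noncomputable def bdatum (G : Type*) [Group G] (l : List G) : ConjClasses G →₀ ℤ :=
  (l.map (fun γ => Finsupp.single (ConjClasses.mk γ) (1 : ℤ))).sum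

lemma degMap_bdatum {G : Type*} [Group G] (l : List G) :
    degMap G (bdatum G l) = Additive.ofMul (Abelianization.of l.prod) := by
  induction l with
  | nil => simp [bdatum]
  | cons a t ih =>
      have : bdatum G (a :: t) = Finsupp.single (ConjClasses.mk a) 1 + bdatum G t := by
        simp [bdatum]
      rw [this, map_add, ih, degMap_single]
      simp [← ofMul_mul]

lemma bdatum_mem_lambdaKer {G : Type*} [Group G] (l : List G)
    (h : l.prod ∈ commutator G) : bdatum G l ∈ lambdaKer G := by
  have : Abelianization.of l.prod = 1 := (QuotientGroup.eq_one_iff _).2 h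
  simp [lambdaKer, AddMonoidHom.mem_ker, degMap_bdatum, this]

lemma bdatum_mem_lambdaKer_of_prod_eq_one {G : Type*} [Group G] (l : List G)
    (h : l.prod = 1) : bdatum G l ∈ lambdaKer G :=
  bdatum_mem_lambdaKer l (by simp [h, Subgroup.one_mem])

/-- The element of `𝔹_G` determined by a list of group elements whose product lies in the
commutator subgroup. -/
noncomputable def bmk {G : Type*} [Group G] (l : List G) (h : bdatum G l ∈ lambdaKer G) :
    BG G :=
  QuotientAddGroup.mk (⟨bdatum G l, h⟩ : lambdaKer G)

/-!
`𝔹_G` is a quotient of a subgroup of the free abelian group on the finitely many conjugacy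
classes of `G`, hence finitely generated. Inversion of conjugacy classes induces an involution `σ`
of that free group which fixes every relation and such that `f + σ f` is always a relation. So if
`n • f` is a relation with `n ≠ 0`, then `σ f = f` and `2 • f = f + σ f` is a relation: every
torsion element of `𝔹_G` has order at most `2`, and the structure theorem for finitely generated
abelian groups gives the claim.
-/

open scoped DirectSum in
theorem AddCommGroup.exists_addEquiv_int_pow_prod_zmod_pow {A : Type*} [AddCommGroup A]
    [AddGroup.FG A] (p : ℕ) [Fact p.Prime] (h : ∀ x : A, IsOfFinAddOrder x → p • x = 0) :
    ∃ a b : ℕ, Nonempty (A ≃+ (Fin a → ℤ) × (Fin b → ZMod p)) := by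
  obtain ⟨a, ι, _, q, hq, e, ⟨φ⟩⟩ := AddCommGroup.equiv_free_prod_directSum_zmod A
  set T := ⨁ i : ι, ZMod (q i ^ e i)
  have : ∀ i, NeZero (q i ^ e i) := fun i => ⟨pow_ne_zero _ (hq i).ne_zero⟩
  have : Finite T := Finite.of_equiv _ DFinsupp.equivFunOnFintype.symm
  let ψ : T →+ A := φ.symm.toAddMonoidHom.comp (AddMonoidHom.inr _ _)
  have hψ : Function.Injective ψ := φ.symm.injective.comp (Prod.mk_right_injective 0)
  have hT : ∀ y : T, p • y = 0 := fun y =>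
    hψ <| by rw [map_nsmul, map_zero, h _ (ψ.isOfFinAddOrder (isOfFinAddOrder_of_finite y))]
  -- `have`, not `let`: instance search would get stuck unfolding `zmodModule`, which cases on `p`
  have : Module (ZMod p) T := AddCommGroup.zmodModule hT
  exact ⟨a, Module.finrank (ZMod p) T, ⟨φ.trans <| AddEquiv.prodCongr
    (Finsupp.linearEquivFunOnFinite ℤ ℤ (Fin a)).toAddEquiv
    (Module.finBasis (ZMod p) T).equivFun.toAddEquiv⟩⟩

namespace ConjClasses

variable {G : Type*} [Group G]

def inv : ConjClasses G → ConjClasses G :=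
  Quotient.map (·⁻¹) fun _ _ ⟨c, hc⟩ => ⟨c, hc.inv_right⟩

@[simp] lemma inv_mk (a : G) : (ConjClasses.mk a).inv = ConjClasses.mk a⁻¹ := rfl

end ConjClasses

section Inversion

variable (G : Type*) [Group G]

noncomputable def invMapDomain : (ConjClasses G →₀ ℤ) →+ (ConjClasses G →₀ ℤ) :=
  Finsupp.mapDomain.addMonoidHom ConjClasses.inv

variable {G}

@[simp] lemma invMapDomain_single (c : ConjClasses G) (k : ℤ) :
    invMapDomain G (single c k) = single c.inv k :=
  mapDomain_single

lemma single_add_single_inv_mem_bRel (γ : G) (k : ℤ) :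
    single (ConjClasses.mk γ) k + single (ConjClasses.mk γ⁻¹) k ∈ bRel G := by
  have hgen : single (ConjClasses.mk γ) 1 + single (ConjClasses.mk γ⁻¹) 1 ∈ bRel G :=
    AddSubgroup.subset_closure (Set.mem_insert_of_mem _ ⟨γ, rfl⟩)
  simpa [smul_add, smul_single] using AddSubgroup.zsmul_mem _ hgen k

lemma add_invMapDomain_mem_bRel (f : ConjClasses G →₀ ℤ) : f + invMapDomain G f ∈ bRel G := by
  induction f using Finsupp.induction_linear with
  | zero => simp [zero_mem]
  | add f g hf hg => simpa only [map_add, add_add_add_comm] using add_mem hf hg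
  | single c k =>
    obtain ⟨γ, rfl⟩ := ConjClasses.mk_surjective c
    simpa using single_add_single_inv_mem_bRel γ k

lemma invMapDomain_eq_self_of_mem_bRel {f : ConjClasses G →₀ ℤ} (hf : f ∈ bRel G) :
    invMapDomain G f = f := by
  suffices bRel G ≤ (invMapDomain G - AddMonoidHom.id _).ker by
    simpa [sub_eq_zero] using this hf
  rw [bRel, AddSubgroup.closure_le]
  rintro x (rfl | ⟨γ, rfl⟩) <;> simp [add_comm]

lemma two_nsmul_mem_bRel_of_nsmul_mem {f : ConjClasses G →₀ ℤ} {n : ℕ} (hn : n ≠ 0)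
    (h : n • f ∈ bRel G) : 2 • f ∈ bRel G := by
  have hinv : invMapDomain G f = f :=
    nsmul_right_injective hn (by simp only [← map_nsmul, invMapDomain_eq_self_of_mem_bRel h])
  simpa [two_nsmul, hinv] using add_invMapDomain_mem_bRel f

lemma BG.two_nsmul_eq_zero_of_isOfFinAddOrder {x : BG G} (hx : IsOfFinAddOrder x) :
    2 • x = 0 := by
  obtain ⟨n, hn, hnx⟩ := hx.exists_nsmul_eq_zero
  induction x using QuotientAddGroup.induction_on with
  | H f =>
    rw [← QuotientAddGroup.mk_nsmul, QuotientAddGroup.eq_zero_iff,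
      AddSubgroup.mem_addSubgroupOf] at hnx ⊢
    exact two_nsmul_mem_bRel_of_nsmul_mem hn.ne' hnx

end Inversion

instance BG.addGroupFG (G : Type*) [Group G] [Finite G] : AddGroup.FG (BG G) :=
  have : AddGroup.FG (lambdaKer G) :=
    Module.Finite.iff_addGroup_fg.mp (inferInstance : Module.Finite ℤ (lambdaKer G).toIntSubmodule)
  QuotientAddGroup.fg _

/-- For every finite group `G`, the group of singular orbit data `𝔹_G`
is isomorphic to `ℤ^a × (ℤ/2ℤ)^b` for some natural numbers `a` and `b`. -/
theorem BG_iso_int_pow_prod_zmod_two_pow (G : Type*) [Group G] [Finite G] :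
    ∃ a b : ℕ, Nonempty (BG G ≃+ ((Fin a → ℤ) × (Fin b → ZMod 2))) :=
  AddCommGroup.exists_addEquiv_int_pow_prod_zmod_pow 2 fun _ =>
    BG.two_nsmul_eq_zero_of_isOfFinAddOrder
end

section
/- Let $C_n=\langle x\rangle$ be cyclic of order $n$ and $C_l=\langle y\rangle$ cyclic of order $l$ with $l\mid n$, included via $i:C_l\to C_n$, $y\mapsto x^{n/l}$. Then the square formed by $\theta$ and induction commutes: for every $\alpha\in\mathbb{B}_{C_l}$ one has $\theta(\mathbb{B}_i(\alpha))=\widetilde{Ind}^{C_n}_{C_l}(\theta(\alpha))$ in $\widetilde{R_{\mathbb{C}}C_n}$. -/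
open Finsupp

/-- The additive map on formal sums of conjugacy classes induced by a group homomorphism. -/
noncomputable def ccFinsuppMap {H G : Type*} [Group H] [Group G] (f : H →* G) :
    (ConjClasses H →₀ ℤ) →+ (ConjClasses G →₀ ℤ) :=
  Finsupp.mapDomain.addMonoidHom (ConjClasses.map f)

@[simp] lemma ccFinsuppMap_single {H G : Type*} [Group H] [Group G] (f : H →* G)
    (a : H) (k : ℤ) :
    ccFinsuppMap f (Finsupp.single (ConjClasses.mk a) k)
      = Finsupp.single (ConjClasses.mk (f a)) k := by
  simp [ccFinsuppMap, Finsupp.mapDomain_single]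
  rfl

lemma degMap_ccFinsuppMap {H G : Type*} [Group H] [Group G] (f : H →* G)
    (x : ConjClasses H →₀ ℤ) :
    degMap G (ccFinsuppMap f x)
      = MonoidHom.toAdditive (Abelianization.map f) (degMap H x) := by
  have : (degMap G).comp (ccFinsuppMap f)
      = (MonoidHom.toAdditive (Abelianization.map f)).comp (degMap H) := by
    apply Finsupp.addHom_ext
    intro c k
    obtain ⟨a, rfl⟩ := ConjClasses.mk_surjective c
    simp
  exact DFunLike.congr_fun this x

lemma ccFinsuppMap_mem_lambdaKer {H G : Type*} [Group H] [Group G] (f : H →* G)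
    {x : ConjClasses H →₀ ℤ} (hx : x ∈ lambdaKer H) :
    ccFinsuppMap f x ∈ lambdaKer G := by
  have hx' : degMap H x = 0 := hx
  simp [lambdaKer, AddMonoidHom.mem_ker, degMap_ccFinsuppMap, hx']

lemma ccFinsuppMap_bRel_le {H G : Type*} [Group H] [Group G] (f : H →* G) :
    (bRel H).map (ccFinsuppMap f) ≤ bRel G := by
  rw [bRel, AddMonoidHom.map_closure, AddSubgroup.closure_le]
  rintro _ ⟨y, hy, rfl⟩
  rcases hy with h1 | ⟨γ, rfl⟩
  · subst h1
    apply AddSubgroup.subset_closure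
    left
    simp
  · apply AddSubgroup.subset_closure
    right
    exact ⟨f γ, by simp⟩

/-- The functorial homomorphism `𝔹_f : 𝔹_H → 𝔹_G` induced by a group homomorphism
`f : H → G`. -/
noncomputable def BMap {H G : Type*} [Group H] [Group G] (f : H →* G) : BG H →+ BG G :=
  QuotientAddGroup.map _ _
    (((ccFinsuppMap f).comp (lambdaKer H).subtype).codRestrict (lambdaKer G)
      (fun x => ccFinsuppMap_mem_lambdaKer f x.2))
    (by
      intro x hx
      rw [AddSubgroup.mem_addSubgroupOf] at hx
      rw [AddSubgroup.mem_comap, AddSubgroup.mem_addSubgroupOf]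
      exact ccFinsuppMap_bRel_le f (AddSubgroup.mem_map_of_mem _ hx))

/-! ### Virtual characters of abelian groups, permutation characters, and the quotient
`R_ℂ G / E_G` with its conjugation involution. -/

/-- The additive group of virtual complex characters of an abelian group `G`
(`ℤ`-linear combinations of the irreducible characters, which for an abelian group are
exactly the homomorphisms `G → ℂˣ`), as a subgroup of the functions `G → ℂ`. -/
noncomputable def RCa (G : Type*) [CommGroup G] : AddSubgroup (G → ℂ) :=
  AddSubgroup.closure {f | ∃ χ : G →* ℂˣ, f = fun g => (χ g : ℂ)}

/-- The permutation character of the action of `G` on `G ⧸ H`, i.e. the character of the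
representation induced from the trivial character of `H`; its value at `g` is the number
of fixed cosets. -/
noncomputable def permChar {G : Type*} [Group G] (H : Subgroup G) : G → ℂ :=
  fun g => (Nat.card {x : G ⧸ H // g • x = x} : ℂ)

/-- The subgroup of `G → ℂ` generated by the characters induced from the trivial
character of subgroups of `G`. -/
noncomputable def EG (G : Type*) [Group G] : AddSubgroup (G → ℂ) :=
  AddSubgroup.closure {f | ∃ H : Subgroup G, f = permChar H}

/-- The quotient `R_ℂ G / E_G` of the group of virtual characters. -/
abbrev RTilde (G : Type*) [CommGroup G] :=
  (RCa G) ⧸ ((EG G).addSubgroupOf (RCa G))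

/-- Pointwise complex conjugation of functions `G → ℂ`, as an additive homomorphism. -/
def conjFun (G : Type*) : (G → ℂ) →+ (G → ℂ) where
  toFun f := fun g => starRingEnd ℂ (f g)
  map_zero' := by funext g; simp
  map_add' f₁ f₂ := by funext g; simp

lemma conjFun_RCa_le (G : Type*) [CommGroup G] : (RCa G).map (conjFun G) ≤ RCa G := by
  rw [RCa, AddMonoidHom.map_closure, AddSubgroup.closure_le]
  rintro _ ⟨f, ⟨χ, rfl⟩, rfl⟩
  apply AddSubgroup.subset_closure
  refine ⟨(Units.map ((starRingEnd ℂ) : ℂ →* ℂ)).comp χ, ?_⟩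
  funext g
  simp [conjFun]

lemma conjFun_EG_le (G : Type*) [Group G] : (EG G).map (conjFun G) ≤ EG G := by
  rw [EG, AddMonoidHom.map_closure, AddSubgroup.closure_le]
  rintro _ ⟨f, ⟨H, rfl⟩, rfl⟩
  apply AddSubgroup.subset_closure
  refine ⟨H, ?_⟩
  funext g
  simp [conjFun, permChar]

/-- The involution of `R_ℂ G / E_G` induced by complex conjugation of characters. -/
noncomputable def conjQ (G : Type*) [CommGroup G] : RTilde G →+ RTilde G :=
  QuotientAddGroup.map _ _
    (((conjFun G).comp (RCa G).subtype).codRestrict (RCa G)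
      (fun x => conjFun_RCa_le G (AddSubgroup.mem_map_of_mem _ x.2)))
    (by
      intro x hx
      rw [AddSubgroup.mem_addSubgroupOf] at hx
      rw [AddSubgroup.mem_comap, AddSubgroup.mem_addSubgroupOf]
      exact conjFun_EG_le G (AddSubgroup.mem_map_of_mem _ hx))

/-- The subgroup `𝔸_G = {a ∈ R_ℂ G / E_G : a + ā = 0}`. -/
noncomputable def AG (G : Type*) [CommGroup G] : AddSubgroup (RTilde G) :=
  (AddMonoidHom.id (RTilde G) + conjQ G).ker

lemma mem_AG_iff {G : Type*} [CommGroup G] (a : RTilde G) :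
    a ∈ AG G ↔ a + conjQ G a = 0 := Iff.rfl

/-! ### The homomorphism `θ` for cyclic groups. -/

/-- The cyclic group of order `n`, written multiplicatively. -/
abbrev Cyc (n : ℕ) := Multiplicative (ZMod n)

/-- The irreducible character `ρ_j` of the cyclic group `C_n`,
`ρ_j(x^v) = e^{2πi j v / n}`. -/
noncomputable def rho (n : ℕ) (j : ℕ) : Cyc n → ℂ :=
  fun g => Complex.exp (2 * (Real.pi : ℂ) * Complex.I * j * ((Multiplicative.toAdd g).val : ℂ) / n)

/-- For `i, j`, with `k = gcd(n, i)` and `i = l k`, the unique integer `r` with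
`1 ≤ r ≤ n/k` and `r ≡ j l (mod n/k)`. -/
def rVal (n i j : ℕ) : ℕ :=
  if (j * (i / n.gcd i)) % (n / n.gcd i) = 0 then n / n.gcd i
  else (j * (i / n.gcd i)) % (n / n.gcd i)

/-- The virtual character `∑_{j=1}^{n-1} (q - (1/n) ∑_s k_s r_{sj}) ρ_j` associated to the
singular orbit data given by the list `L = [x^{i_1}, …, x^{i_q}]`. -/
noncomputable def thetaFun (n : ℕ) (L : List (Cyc n)) : Cyc n → ℂ :=
  ∑ j ∈ Finset.Ico 1 n,
    ((L.length : ℂ)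
        - (L.map (fun γ => ((n.gcd (Multiplicative.toAdd γ).val
            * rVal n (Multiplicative.toAdd γ).val j : ℕ) : ℂ))).sum / n)
      • rho n j

/-- `θ : 𝔹_{C_n} → R_ℂ C_n / D_{C_n}` is the homomorphism sending the class of a
singular orbit datum `[x^{i_1}, …, x^{i_q}]` to the class of the virtual character
`∑_{j=1}^{n-1} (q - (1/n) ∑_s k_s r_{sj}) ρ_j`. -/
def IsTheta {n : ℕ} (θ : BG (Cyc n) →+ RTilde (Cyc n)) : Prop :=
  ∀ (L : List (Cyc n)) (hL : bdatum (Cyc n) L ∈ lambdaKer (Cyc n)) (r : RCa (Cyc n)),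
    (r : Cyc n → ℂ) = thetaFun n L →
      θ (bmk L hL) = QuotientAddGroup.mk r

/-- The inclusion `C_l → C_n` (for `l ∣ n`) sending the generator `y` of `C_l` to
`x^(n/l)`. -/
noncomputable def cycIncl (n l : ℕ) (hl : l ∣ n) : Cyc l →* Cyc n :=
  AddMonoidHom.toMultiplicative
    (ZMod.lift l ⟨(zmultiplesHom (ZMod n)) ((n / l : ℕ) : ZMod n), by
      simp only [zmultiplesHom_apply]
      rw [zsmul_eq_mul]
      push_cast
      rw [← Nat.cast_mul, Nat.mul_div_cancel' hl, ZMod.natCast_self]⟩)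

open scoped Classical in
/-- The induced character: for a (virtual) character `f` of `C_l ≤ C_n`, the induced
character of `C_n` vanishes off `C_l` and equals `[C_n : C_l] ⬝ f` on `C_l` (the
standard induced-character formula for an abelian group). -/
noncomputable def cycIndFun (n l : ℕ) (hl : l ∣ n) (f : Cyc l → ℂ) : Cyc n → ℂ :=
  fun g => ((n / l : ℕ) : ℂ) *
    (if g ∈ (cycIncl n l hl).range
      then f (Multiplicative.ofAdd (((Multiplicative.toAdd g).val / (n / l) : ℕ) : ZMod l))
      else 0)

/-- `I` is the homomorphism `R_ℂ C_l / D_{C_l} → R_ℂ C_n / D_{C_n}` induced by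
induction of characters along the inclusion `C_l → C_n`. -/
def IsIndQ (n l : ℕ) (hl : l ∣ n) (I : RTilde (Cyc l) →+ RTilde (Cyc n)) : Prop :=
  ∀ (r' : RCa (Cyc l)) (r : RCa (Cyc n)),
    (r : Cyc n → ℂ) = cycIndFun n l hl (r' : Cyc l → ℂ) →
      I (QuotientAddGroup.mk r') = QuotientAddGroup.mk r


/-!
Every element of `𝔹_{C_l}` is a difference of classes of singular orbit data, on which `θ` and
induction are given by explicit virtual characters, so it suffices to compare two functions on
`C_n`. Let `m = n / l` and let `c_j` be the coefficient of `ρ_j` in `θ`, now for all `j`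
(`c_0 = 0`). Pushing a datum into `C_n` multiplies each `k_s` by `m` and leaves each `r_{sj}`
unchanged, so the coefficients of `θ(𝔹_i α)` are those of `θ(α)`, extended `l`-periodically.
On the other side `Ind ρ_j = ∑_{t<m} ρ_{j+lt}` by orthogonality of the `m`-th roots of unity,
and writing `j < n` as `j' + l t` matches the two sums.
-/

open Multiplicative Finset

lemma Finset.sum_range_mul_eq_sum_sum {M : Type*} [AddCommMonoid M] (f : ℕ → M) (l m : ℕ) :
    ∑ j ∈ range (l * m), f j = ∑ i ∈ range l, ∑ t ∈ range m, f (i + l * t) := by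
  induction m with
  | zero => simp
  | succ m ih =>
      rw [Nat.mul_succ, sum_range_add, ih]
      simp only [sum_range_succ, sum_add_distrib, add_comm]

section SingularOrbitData

variable {G : Type*} [Group G]

lemma bdatum_cons (a : G) (L : List G) :
    bdatum G (a :: L) = single (ConjClasses.mk a) 1 + bdatum G L := by
  simp [bdatum]

lemma bdatum_append (L₁ L₂ : List G) : bdatum G (L₁ ++ L₂) = bdatum G L₁ + bdatum G L₂ := by
  simp [bdatum]

lemma bdatum_replicate (k : ℕ) (γ : G) :
    bdatum G (List.replicate k γ) = single (ConjClasses.mk γ) (k : ℤ) := by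
  induction k with
  | zero => simp [bdatum]
  | succ k ih =>
      rw [List.replicate_succ, bdatum_cons, ih, ← single_add, Nat.cast_succ, add_comm]

lemma exists_bdatum_sub (x : ConjClasses G →₀ ℤ) :
    ∃ L₁ L₂ : List G, x = bdatum G L₁ - bdatum G L₂ := by
  induction x using Finsupp.induction with
  | zero => exact ⟨[], [], by simp [bdatum]⟩
  | single_add a b f _ _ ih =>
      obtain ⟨L₁, L₂, rfl⟩ := ih
      obtain ⟨γ, rfl⟩ := ConjClasses.mk_surjective a
      rcases le_or_gt 0 b with hb | hb
      · refine ⟨List.replicate b.toNat γ ++ L₁, L₂, ?_⟩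
        rw [bdatum_append, bdatum_replicate, Int.toNat_of_nonneg hb]
        abel
      · refine ⟨L₁, List.replicate (-b).toNat γ ++ L₂, ?_⟩
        rw [bdatum_append, bdatum_replicate, Int.toNat_of_nonneg (by omega), single_neg]
        abel

lemma BG.addMonoidHom_ext {A : Type*} [AddGroup A] {f g : BG G →+ A}
    (h : ∀ L hL, f (bmk L hL) = g (bmk L hL)) : f = g := by
  refine QuotientAddGroup.addMonoidHom_ext _ (AddMonoidHom.ext fun x => ?_)
  obtain ⟨L₁, L₂, hx⟩ := exists_bdatum_sub (x : ConjClasses G →₀ ℤ)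
  -- prepending `(L₁.prod)⁻¹` to both lists turns them into singular orbit data
  set a := L₁.prod⁻¹
  have h₁ : bdatum G (a :: L₁) ∈ lambdaKer G :=
    bdatum_mem_lambdaKer_of_prod_eq_one _ (by simp [a])
  have h₂ : bdatum G (a :: L₂) ∈ lambdaKer G := by
    have hdeg : degMap G (bdatum G L₁) = degMap G (bdatum G L₂) := by
      rw [← sub_eq_zero, ← map_sub, ← hx]
      exact x.2
    rw [lambdaKer, AddMonoidHom.mem_ker, bdatum_cons, map_add, ← hdeg, ← map_add, ← bdatum_cons]
    exact h₁
  have hx' : x = ⟨_, h₁⟩ - ⟨_, h₂⟩ := Subtype.ext (by simp [bdatum_cons, hx])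
  rw [AddMonoidHom.comp_apply, AddMonoidHom.comp_apply, QuotientAddGroup.mk'_apply, hx',
    QuotientAddGroup.mk_sub, map_sub, map_sub]
  exact congr_arg₂ _ (h _ h₁) (h _ h₂)

lemma ccFinsuppMap_bdatum {H : Type*} [Group H] (f : H →* G) (L : List H) :
    ccFinsuppMap f (bdatum H L) = bdatum G (L.map f) := by
  induction L with
  | nil => simp [bdatum]
  | cons a L ih => rw [bdatum_cons, map_add, ih, ccFinsuppMap_single, List.map_cons, bdatum_cons]

lemma BMap_bmk {H : Type*} [Group H] (f : H →* G) (L : List H) (h : bdatum H L ∈ lambdaKer H)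
    (h' : bdatum G (L.map f) ∈ lambdaKer G) : BMap f (bmk L h) = bmk (L.map f) h' :=
  congr_arg QuotientAddGroup.mk (Subtype.ext (ccFinsuppMap_bdatum f L))

end SingularOrbitData

lemma prod_eq_one_of_bdatum_mem_lambdaKer {G : Type*} [CommGroup G] {L : List G}
    (h : bdatum G L ∈ lambdaKer G) : L.prod = 1 := by
  rw [lambdaKer, AddMonoidHom.mem_ker, degMap_bdatum, ofMul_eq_zero] at h
  exact (Abelianization.equivOfComm (H := G)).map_eq_one_iff.mp h

lemma rVal_zero (n a : ℕ) : rVal n a 0 = n / n.gcd a := by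
  simp [rVal]

lemma rVal_mod (n a j : ℕ) : rVal n a (j % n) = rVal n a j := by
  have hdvd : n / n.gcd a ∣ n := Nat.div_dvd_of_dvd (Nat.gcd_dvd_left n a)
  have hmod : j % n * (a / n.gcd a) % (n / n.gcd a) = j * (a / n.gcd a) % (n / n.gcd a) := by
    rw [Nat.mul_mod, Nat.mod_mod_of_dvd _ hdvd, ← Nat.mul_mod]
  simp only [rVal, hmod]

lemma gcd_mul_rVal_modEq (n a j : ℕ) : n.gcd a * rVal n a j ≡ j * a [MOD n] := by
  have hrVal : rVal n a j ≡ j * (a / n.gcd a) [MOD n / n.gcd a] := by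
    unfold rVal
    split_ifs with h
    · exact (Nat.mod_self _).trans h.symm
    · exact Nat.mod_modEq _ _
  have h := hrVal.mul_left' (n.gcd a)
  rwa [Nat.mul_div_cancel' (Nat.gcd_dvd_left n a), mul_left_comm,
    Nat.mul_div_cancel' (Nat.gcd_dvd_right n a)] at h

lemma gcd_mul_rVal_mul_left {m : ℕ} (hm : 0 < m) (l a j : ℕ) :
    (m * l).gcd (m * a) * rVal (m * l) (m * a) j = m * (l.gcd a * rVal l a j) := by
  simp only [rVal, Nat.gcd_mul_left, Nat.mul_div_mul_left _ _ hm, mul_assoc]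

lemma rho_eq_exp_pow (n j : ℕ) (g : Cyc n) :
    rho n j g = Complex.exp (2 * Real.pi * Complex.I / n) ^ (j * (toAdd g).val) := by
  rw [rho, ← Complex.exp_nat_mul]
  push_cast
  ring_nf

lemma rho_mem_RCa (n : ℕ) [NeZero n] (j : ℕ) : rho n j ∈ RCa (Cyc n) := by
  have hζ := Complex.isPrimitiveRoot_exp n (NeZero.ne n)
  set u : ℂˣ := (hζ.isUnit (NeZero.ne n)).unit
  have hu : u ^ n = 1 := Units.ext (by simpa [u] using hζ.pow_eq_one)
  have hζn : (u ^ j) ^ n = 1 := by rw [← pow_mul, mul_comm, pow_mul, hu, one_pow]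
  refine AddSubgroup.subset_closure ⟨(AddChar.zmodChar n hζn).toMonoidHom, funext fun g => ?_⟩
  simp [rho_eq_exp_pow, AddChar.zmodChar_apply, u, pow_mul]

noncomputable def thetaCoeff (n : ℕ) (L : List (Cyc n)) (j : ℕ) : ℂ :=
  L.length - (L.map fun γ => ((n.gcd (toAdd γ).val * rVal n (toAdd γ).val j : ℕ) : ℂ)).sum / n

section Theta

variable {n : ℕ}

lemma thetaCoeff_zero [NeZero n] (L : List (Cyc n)) : thetaCoeff n L 0 = 0 := by
  have hn : (n : ℂ) ≠ 0 := NeZero.ne _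
  simp [thetaCoeff, rVal_zero, Nat.mul_div_cancel' (Nat.gcd_dvd_left n _), hn]

lemma thetaFun_eq_sum_range [NeZero n] (L : List (Cyc n)) :
    thetaFun n L = ∑ j ∈ range n, thetaCoeff n L j • rho n j := by
  rw [range_eq_Ico, sum_eq_sum_Ico_succ_bot (NeZero.pos n), thetaCoeff_zero, zero_smul, zero_add]
  rfl

lemma thetaCoeff_mod (L : List (Cyc n)) (j : ℕ) : thetaCoeff n L (j % n) = thetaCoeff n L j := by
  simp only [thetaCoeff, rVal_mod]

lemma dvd_sum_gcd_mul_rVal [NeZero n] {L : List (Cyc n)} (h : L.prod = 1) (j : ℕ) :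
    n ∣ (L.map fun γ => n.gcd (toAdd γ).val * rVal n (toAdd γ).val j).sum := by
  have hterm : ∀ γ : Cyc n,
      ((n.gcd (toAdd γ).val * rVal n (toAdd γ).val j : ℕ) : ZMod n) = j * toAdd γ := fun γ => by
    rw [(ZMod.natCast_eq_natCast_iff _ _ _).2 (gcd_mul_rVal_modEq n _ j), Nat.cast_mul,
      ZMod.natCast_zmod_val]
  rw [← ZMod.natCast_eq_zero_iff, Nat.cast_list_sum, List.map_map, Function.comp_def]
  simp only [hterm, List.sum_map_mul_left, ← toAdd_list_sum, h, toAdd_one, mul_zero]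

lemma exists_thetaCoeff_eq_intCast [NeZero n] {L : List (Cyc n)} (h : L.prod = 1) (j : ℕ) :
    ∃ z : ℤ, thetaCoeff n L j = z := by
  obtain ⟨d, hd⟩ := dvd_sum_gcd_mul_rVal h j
  refine ⟨L.length - d, ?_⟩
  have hsum := congr_arg (fun k : ℕ => (k : ℂ)) hd
  simp only [Nat.cast_list_sum, List.map_map, Function.comp_def, Nat.cast_mul] at hsum
  simp only [thetaCoeff, Nat.cast_mul, hsum, Int.cast_sub, Int.cast_natCast,
    mul_div_cancel_left₀ _ (NeZero.ne (n : ℂ))]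

lemma thetaFun_mem_RCa [NeZero n] {L : List (Cyc n)} (h : L.prod = 1) :
    thetaFun n L ∈ RCa (Cyc n) := by
  refine AddSubgroup.sum_mem _ fun j _ => ?_
  obtain ⟨z, hz⟩ := exists_thetaCoeff_eq_intCast h j
  rw [← thetaCoeff, hz, Int.cast_smul_eq_zsmul]
  exact zsmul_mem (rho_mem_RCa n j) z

end Theta

lemma cycIndFun_sum_smul {n l : ℕ} (hl : l ∣ n) {ι : Type*} (s : Finset ι) (c : ι → ℂ)
    (f : ι → Cyc l → ℂ) :
    cycIndFun n l hl (∑ i ∈ s, c i • f i) = ∑ i ∈ s, c i • cycIndFun n l hl (f i) := by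
  classical
  funext g
  simp only [cycIndFun, Finset.sum_apply, Pi.smul_apply, smul_eq_mul]
  split_ifs
  · simp only [Finset.mul_sum, mul_left_comm]
  · simp

section Induction

variable {n l : ℕ} [NeZero n] [NeZero l]

lemma div_pos_of_dvd (hl : l ∣ n) : 0 < n / l :=
  Nat.div_pos (Nat.le_of_dvd (NeZero.pos n) hl) (NeZero.pos l)

lemma val_cycIncl (hl : l ∣ n) (γ : Cyc l) :
    (toAdd (cycIncl n l hl γ)).val = n / l * (toAdd γ).val := by
  have hγ : toAdd γ = (((toAdd γ).val : ℤ) : ZMod l) := by simp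
  have hcast : toAdd (cycIncl n l hl γ) = ((n / l * (toAdd γ).val : ℕ) : ZMod n) := by
    rw [cycIncl, AddMonoidHom.toMultiplicative_apply_apply, toAdd_ofAdd, hγ, ZMod.lift_coe]
    simp [zsmul_eq_mul, mul_comm]
  rw [hcast, ZMod.val_natCast_of_lt]
  calc n / l * (toAdd γ).val < n / l * l :=
        Nat.mul_lt_mul_of_pos_left (ZMod.val_lt _) (div_pos_of_dvd hl)
    _ = n := Nat.div_mul_cancel hl

lemma mem_range_cycIncl_iff (hl : l ∣ n) (g : Cyc n) :
    g ∈ (cycIncl n l hl).range ↔ n / l ∣ (toAdd g).val := by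
  refine ⟨fun ⟨γ, hγ⟩ => ⟨_, hγ ▸ val_cycIncl hl γ⟩, fun ⟨u, hu⟩ => ?_⟩
  have hul : n / l * u < n / l * l := by
    rw [Nat.div_mul_cancel hl, ← hu]
    exact ZMod.val_lt _
  refine ⟨ofAdd (u : ZMod l), ZMod.val_injective n ?_⟩
  change (toAdd (cycIncl n l hl (ofAdd (u : ZMod l)))).val = (toAdd g).val
  rw [val_cycIncl, toAdd_ofAdd, ZMod.val_natCast_of_lt (Nat.lt_of_mul_lt_mul_left hul), hu]

lemma thetaCoeff_map_cycIncl (hl : l ∣ n) (L : List (Cyc l)) (j : ℕ) :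
    thetaCoeff n (L.map (cycIncl n l hl)) j = thetaCoeff l L j := by
  have hm : 0 < n / l := div_pos_of_dvd hl
  have hterm : ∀ γ : Cyc l,
      n.gcd (toAdd (cycIncl n l hl γ)).val * rVal n (toAdd (cycIncl n l hl γ)).val j
        = n / l * (l.gcd (toAdd γ).val * rVal l (toAdd γ).val j) := fun γ => by
    rw [val_cycIncl, ← gcd_mul_rVal_mul_left hm, Nat.div_mul_cancel hl]
  have hn : (n : ℂ) = (n / l : ℕ) * l := by exact_mod_cast (Nat.div_mul_cancel hl).symm
  have hm' : ((n / l : ℕ) : ℂ) ≠ 0 := Nat.cast_ne_zero.2 hm.ne'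
  simp only [thetaCoeff, List.length_map, List.map_map, Function.comp_def, hterm]
  simp only [Nat.cast_mul, List.sum_map_mul_left, hn, mul_div_mul_left _ _ hm']

lemma rho_cycIncl (hl : l ∣ n) (j : ℕ) (γ : Cyc l) : rho n j (cycIncl n l hl γ) = rho l j γ := by
  have hm : ((n / l : ℕ) : ℂ) ≠ 0 := Nat.cast_ne_zero.2 (div_pos_of_dvd hl).ne'
  have hn : (n : ℂ) = l * (n / l : ℕ) := by exact_mod_cast (Nat.mul_div_cancel' hl).symm
  simp only [rho]
  rw [val_cycIncl, hn]
  push_cast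
  congr 1
  field_simp

lemma cycIndFun_rho (hl : l ∣ n) (j : ℕ) :
    cycIndFun n l hl (rho l j) = ∑ t ∈ range (n / l), rho n (j + l * t) := by
  classical
  funext g
  have hm : 0 < n / l := div_pos_of_dvd hl
  set ζ := Complex.exp (2 * Real.pi * Complex.I / n) with hζ_def
  have hζl : IsPrimitiveRoot (ζ ^ l) (n / l) := (Complex.isPrimitiveRoot_exp n (NeZero.ne n)).pow
    (NeZero.pos n) (Nat.mul_div_cancel' hl).symm
  have hsum : ∑ t ∈ range (n / l), rho n (j + l * t) g
      = rho n j g * ∑ t ∈ range (n / l), ((ζ ^ l) ^ (toAdd g).val) ^ t := by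
    rw [Finset.mul_sum]
    refine sum_congr rfl fun t _ => ?_
    rw [rho_eq_exp_pow, rho_eq_exp_pow, ← hζ_def, ← pow_mul, ← pow_mul, ← pow_add]
    ring_nf
  rw [Finset.sum_apply, hsum]
  by_cases hg : g ∈ (cycIncl n l hl).range
  · obtain ⟨γ, rfl⟩ := hg
    rw [cycIndFun, if_pos ⟨γ, rfl⟩, (hζl.pow_eq_one_iff_dvd _).2 ⟨_, val_cycIncl hl γ⟩,
      val_cycIncl, Nat.mul_div_cancel_left _ hm, ZMod.natCast_zmod_val, ofAdd_toAdd, rho_cycIncl]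
    simp [mul_comm]
  · have hne : (ζ ^ l) ^ (toAdd g).val ≠ 1 := fun h =>
      hg ((mem_range_cycIncl_iff hl g).2 ((hζl.pow_eq_one_iff_dvd _).1 h))
    have hpow : ((ζ ^ l) ^ (toAdd g).val) ^ (n / l) = 1 := by
      rw [← pow_mul, mul_comm, pow_mul, hζl.pow_eq_one, one_pow]
    rw [cycIndFun, if_neg hg, geom_sum_eq hne, hpow]
    simp

end Induction

lemma thetaFun_map_cycIncl {n l : ℕ} [NeZero n] [NeZero l] (hl : l ∣ n) (L : List (Cyc l)) :
    thetaFun n (L.map (cycIncl n l hl)) = cycIndFun n l hl (thetaFun l L) := by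
  have hperiodic : ∀ i ∈ range l, ∀ t, thetaCoeff l L (i + l * t) = thetaCoeff l L i :=
    fun i hi t => by
      rw [← thetaCoeff_mod, Nat.add_mul_mod_self_left, Nat.mod_eq_of_lt (mem_range.1 hi)]
  calc thetaFun n (L.map (cycIncl n l hl))
      = ∑ j ∈ range (l * (n / l)), thetaCoeff l L j • rho n j := by
        rw [thetaFun_eq_sum_range, Nat.mul_div_cancel' hl]
        simp only [thetaCoeff_map_cycIncl]
    _ = ∑ i ∈ range l, ∑ t ∈ range (n / l), thetaCoeff l L i • rho n (i + l * t) := by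
        rw [sum_range_mul_eq_sum_sum]
        refine sum_congr rfl fun i hi => sum_congr rfl fun t _ => ?_
        rw [hperiodic i hi t]
    _ = cycIndFun n l hl (thetaFun l L) := by
        simp only [thetaFun_eq_sum_range, cycIndFun_sum_smul, cycIndFun_rho, Finset.smul_sum]

/-- For the inclusion `i : C_l → C_n` (`l ∣ n`), the square formed by
`θ` and induction commutes: `θ ∘ 𝔹_i = Ind^{C_n}_{C_l} ∘ θ`. -/
theorem theta_commutes_with_induction (n l : ℕ) [NeZero n] [NeZero l] (hl : l ∣ n)
    (θn : BG (Cyc n) →+ RTilde (Cyc n)) (hθn : IsTheta θn)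
    (θl : BG (Cyc l) →+ RTilde (Cyc l)) (hθl : IsTheta θl)
    (I : RTilde (Cyc l) →+ RTilde (Cyc n)) (hI : IsIndQ n l hl I) :
    ∀ α : BG (Cyc l), θn (BMap (cycIncl n l hl) α) = I (θl α) := by
  suffices hcomp : θn.comp (BMap (cycIncl n l hl)) = I.comp θl from
    fun α => DFunLike.congr_fun hcomp α
  refine BG.addMonoidHom_ext fun L hL => ?_
  have hprod : L.prod = 1 := prod_eq_one_of_bdatum_mem_lambdaKer hL
  have hprod' : (L.map (cycIncl n l hl)).prod = 1 := by rw [← map_list_prod, hprod, map_one]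
  have hL' := bdatum_mem_lambdaKer_of_prod_eq_one _ hprod'
  let χl : RCa (Cyc l) := ⟨thetaFun l L, thetaFun_mem_RCa hprod⟩
  let χn : RCa (Cyc n) := ⟨thetaFun n (L.map (cycIncl n l hl)), thetaFun_mem_RCa hprod'⟩
  rw [AddMonoidHom.comp_apply, AddMonoidHom.comp_apply, BMap_bmk _ _ hL hL', hθn _ hL' χn rfl,
    hθl L hL χl rfl, hI χl χn (thetaFun_map_cycIncl hl L)]
end

section
/- Let $G=S_3$ be the symmetric group on three letters and let $a\in S_3$ be an element of order 3 with conjugacy class $\hat a$. Then $\mathbb{B}_{S_3}$ is cyclic of order 2, generated by the one-element datum $[\hat a]$; in particular $2\cdot[\hat a]=0$ and $[\hat a]\neq 0$. -/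
open Finsupp

lemma abelianization_of_eq_one_of_orderOf_eq_three (a : Equiv.Perm (Fin 3))
    (ha : orderOf a = 3) : Abelianization.of a = 1 := by
  have h3 : a ^ 3 = 1 := by
    have := pow_orderOf_eq_one a
    rwa [ha] at this
  have hconj : ∃ b : Equiv.Perm (Fin 3), b * a * b⁻¹ = a⁻¹ := by
    clear ha
    revert h3
    revert a
    decide
  obtain ⟨b, hb⟩ := hconj
  have h2 : Abelianization.of a⁻¹ = Abelianization.of a := by
    calc Abelianization.of a⁻¹ = Abelianization.of (b * a * b⁻¹) := by rw [hb]
      _ = Abelianization.of b * Abelianization.of a * (Abelianization.of b)⁻¹ := by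
          simp [map_mul]
      _ = Abelianization.of a := by
          rw [mul_comm (Abelianization.of b) (Abelianization.of a), mul_inv_cancel_right]
  have h4 : Abelianization.of a ^ 2 = 1 := by
    rw [pow_two]
    nth_rewrite 1 [← h2]
    simp
  have h5 : Abelianization.of a ^ 3 = 1 := by
    rw [← map_pow, h3, map_one]
  calc Abelianization.of a = Abelianization.of a ^ 3 * (Abelianization.of a ^ 2)⁻¹ := by
        group
    _ = 1 := by rw [h4, h5]; simp

lemma bdatum_single_mem (a : Equiv.Perm (Fin 3)) (ha : orderOf a = 3) :
    bdatum (Equiv.Perm (Fin 3)) [a] ∈ lambdaKer (Equiv.Perm (Fin 3)) := by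
  have h1 : Abelianization.of a = 1 :=
    abelianization_of_eq_one_of_orderOf_eq_three a ha
  simp [lambdaKer, AddMonoidHom.mem_ker, degMap_bdatum, h1]

/-!
Every element of `S₃` is conjugate to its inverse, so the relation `[γ̂, γ̂⁻¹] = 0` says
`2 • [γ̂] = 0`, and a formal combination of classes dies in `𝔹` exactly when it is even away
from the identity class. Applying the sign to the product, a datum in the commutator subgroup `A₃`
has even multiplicity of the transpositions; so it is trivial in `𝔹_{S₃}` exactly when its
multiplicity of the 3-cycles is even. That parity is an isomorphism `𝔹_{S₃} ≃ ℤ/2` sending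
`[â]` to `1`.
-/

section Ambivalent

variable {G : Type*} [Group G]

noncomputable def parityAt (c : ConjClasses G) : (ConjClasses G →₀ ℤ) →+ ZMod 2 :=
  (Int.castAddHom (ZMod 2)).comp (Finsupp.applyAddHom c)

lemma parityAt_eq_zero_iff {c : ConjClasses G} {x : ConjClasses G →₀ ℤ} :
    parityAt c x = 0 ↔ Even (x c) :=
  ZMod.intCast_eq_zero_iff_even

lemma mem_bRel_iff_even (hG : ∀ g : G, IsConj g g⁻¹) {x : ConjClasses G →₀ ℤ} :
    x ∈ bRel G ↔ ∀ c ≠ ConjClasses.mk 1, Even (x c) := by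
  have mk_inv (γ : G) : ConjClasses.mk γ⁻¹ = ConjClasses.mk γ :=
    ConjClasses.mk_eq_mk_iff_isConj.2 (hG γ).symm
  constructor
  · intro hx
    induction hx using AddSubgroup.closure_induction with
    | mem y hy =>
      rcases hy with rfl | ⟨γ, rfl⟩
      · intro c hc
        simp [Ne.symm hc]
      · intro c _
        rw [mk_inv, ← single_add]
        by_cases h : ConjClasses.mk γ = c <;> simp [h]
    | zero => simp
    | add y z _ _ hy hz => exact fun c hc => (hy c hc).add (hz c hc)
    | neg y _ hy => exact fun c hc => by simpa using (hy c hc).neg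
  · intro hx
    rw [← x.sum_single]
    refine AddSubgroup.sum_mem _ fun c _ => ?_
    by_cases hc : c = ConjClasses.mk 1
    · subst hc
      have h1 : single (ConjClasses.mk (1 : G)) 1 ∈ bRel G :=
        AddSubgroup.subset_closure (Set.mem_insert _ _)
      simpa using AddSubgroup.zsmul_mem _ h1 (x (ConjClasses.mk 1))
    · obtain ⟨k, hk⟩ := hx c hc
      obtain ⟨γ, rfl⟩ := c.exists_rep
      have h2 : single (ConjClasses.mk γ) 1 + single (ConjClasses.mk γ⁻¹) 1 ∈ bRel G :=
        AddSubgroup.subset_closure (Set.mem_insert_of_mem _ ⟨γ, rfl⟩)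
      rw [mk_inv, ← single_add] at h2
      simpa [hk, ← two_mul, mul_comm] using AddSubgroup.zsmul_mem _ h2 k

end Ambivalent

lemma cyclic_of_order_two_of_injective_zmod_two {A : Type*} [AddGroup A] {φ : A →+ ZMod 2}
    (hφ : Function.Injective φ) {g : A} (hg : φ g = 1) :
    Nat.card A = 2 ∧ AddSubgroup.zmultiples g = ⊤ ∧ 2 • g = 0 ∧ g ≠ 0 := by
  have zmod_two : ∀ z : ZMod 2, z = 0 ∨ z = 1 := by decide
  have hsurj : Function.Surjective φ := fun z => by
    rcases zmod_two z with rfl | rfl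
    exacts [⟨0, map_zero φ⟩, ⟨g, hg⟩]
  refine ⟨?_, ?_, hφ ?_, ?_⟩
  · rw [Nat.card_eq_of_bijective φ ⟨hφ, hsurj⟩, Nat.card_zmod]
  · refine eq_top_iff.2 fun x _ => ?_
    rcases zmod_two (φ x) with h | h
    · simp [hφ (h.trans (map_zero φ).symm)]
    · simp [hφ (h.trans hg.symm)]
  · simp only [map_nsmul, hg, map_zero]
    decide
  · rintro rfl
    exact absurd hg (by simp)

section SymmetricGroupThree

open Equiv Equiv.Perm

local notation "S₃" => Perm (Fin 3)

lemma isConj_inv_self_perm_fin_three (g : S₃) : IsConj g g⁻¹ := by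
  revert g; decide

lemma isConj_finRotate_of_orderOf_eq_three {a : S₃} (ha : orderOf a = 3) :
    IsConj (finRotate 3) a := by
  have h3 : a ^ 3 = 1 := by simpa [ha] using pow_orderOf_eq_one a
  have h1 : a ≠ 1 := by rintro rfl; simp at ha
  clear ha; revert a; decide

lemma conjClasses_perm_fin_three (c : ConjClasses S₃) :
    c = ConjClasses.mk 1 ∨ c = ConjClasses.mk (finRotate 3) ∨
      c = ConjClasses.mk (swap 0 1) := by
  obtain ⟨γ, rfl⟩ := c.exists_rep
  simp only [ConjClasses.mk_eq_mk_iff_isConj]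
  revert γ; decide

lemma sign_degMap (x : ConjClasses S₃ →₀ ℤ) :
    Abelianization.lift sign (degMap S₃ x).toMul =
      (x (ConjClasses.mk (swap 0 1))).negOnePow := by
  induction x using Finsupp.induction_linear with
  | zero => simp
  | add x y hx hy => simp [hx, hy, Int.negOnePow_add]
  | single c k =>
    obtain ⟨γ, rfl⟩ := c.exists_rep
    have hsign : sign γ = if IsConj γ (swap 0 1) then -1 else 1 := by
      revert γ; decide
    simp [hsign, single_apply, ConjClasses.mk_eq_mk_iff_isConj, Int.negOnePow_def]

lemma even_apply_swap_of_mem_lambdaKer {x : ConjClasses S₃ →₀ ℤ} (hx : x ∈ lambdaKer S₃) :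
    Even (x (ConjClasses.mk (swap 0 1))) := by
  rw [← Int.negOnePow_eq_one_iff, ← sign_degMap, AddMonoidHom.mem_ker.1 hx]
  simp

lemma mem_bRel_iff_even_apply_finRotate {x : ConjClasses S₃ →₀ ℤ} (hx : x ∈ lambdaKer S₃) :
    x ∈ bRel S₃ ↔ Even (x (ConjClasses.mk (finRotate 3))) := by
  rw [mem_bRel_iff_even isConj_inv_self_perm_fin_three]
  refine ⟨fun h => h _ (by decide), fun h c hc => ?_⟩
  rcases conjClasses_perm_fin_three c with rfl | rfl | rfl
  · exact absurd rfl hc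
  · exact h
  · exact even_apply_swap_of_mem_lambdaKer hx

noncomputable def parityFinRotate : BG S₃ →+ ZMod 2 :=
  QuotientAddGroup.lift _
    ((parityAt (ConjClasses.mk (finRotate 3))).comp (lambdaKer S₃).subtype)
    fun x hx => AddMonoidHom.mem_ker.2 <|
      parityAt_eq_zero_iff.2 <| (mem_bRel_iff_even_apply_finRotate x.2).1 hx

lemma parityFinRotate_injective : Function.Injective parityFinRotate := by
  rw [injective_iff_map_eq_zero]
  rintro ⟨x⟩ hx
  exact (QuotientAddGroup.eq_zero_iff _).2 <|
    (mem_bRel_iff_even_apply_finRotate x.2).2 (parityAt_eq_zero_iff.1 hx)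

lemma parityFinRotate_bmk_singleton {a : S₃} (ha : orderOf a = 3) :
    parityFinRotate (bmk [a] (bdatum_single_mem a ha)) = 1 := by
  change parityAt _ (bdatum S₃ [a]) = 1
  rw [ConjClasses.mk_eq_mk_iff_isConj.2 (isConj_finRotate_of_orderOf_eq_three ha)]
  simp [bdatum, parityAt]

end SymmetricGroupThree

/-- For `G = S₃` and `a ∈ S₃` of order 3 with conjugacy class `â`, the
group `𝔹_{S₃}` is cyclic of order 2, generated by the one-element datum `[â]`; in
particular `2 • [â] = 0` and `[â] ≠ 0`. -/
theorem BG_S3_cyclic_of_order_two (a : Equiv.Perm (Fin 3)) (ha : orderOf a = 3) :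
    Nat.card (BG (Equiv.Perm (Fin 3))) = 2 ∧
    AddSubgroup.zmultiples (bmk [a] (bdatum_single_mem a ha)) = ⊤ ∧
    2 • (bmk [a] (bdatum_single_mem a ha)) = 0 ∧
    bmk [a] (bdatum_single_mem a ha) ≠ 0 :=
  cyclic_of_order_two_of_injective_zmod_two parityFinRotate_injective
    (parityFinRotate_bmk_singleton ha)
end
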